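/- Let F be a graph that contains at least one edge, and let k ≥ 2 and r ≥ k + |V(F)| be integers, where F is not a matching. For sufficiently large n, the maximum number of hyperedges in an n-vertex r-uniform hypergraph with no Berge copy of F ∪ M_{k-1} equals the maximum number of hyperedges in an n-vertex r-uniform hypergraph with no Berge copy of F; that is, ex_r(n, Berge-(F ∪ M_{k-1})) = ex_r(n, Berge-F). -/

import Mathlib

open Finset

/-- A Berge copy of the graph `F` in the hypergraph `H`: an injective embedding of the
vertices of `F` together with an injective assignment of distinct hyperedges to the
edges of `F`, each hyperedge containing (the images of) both endpoints of its edge. -/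
def IsBergeCopy {α V : Type*} (F : SimpleGraph α) (H : Finset (Finset V)) : Prop :=
  ∃ (f : α → V) (φ : Sym2 α → Finset V),
    Function.Injective f ∧ Set.InjOn φ F.edgeSet ∧
    ∀ e ∈ F.edgeSet, φ e ∈ H ∧ ∀ x ∈ e, f x ∈ φ e

/-- The Turán number `ex_r(n, Berge-F)`: the maximum number of hyperedges in an
`n`-vertex `r`-uniform hypergraph with no Berge copy of `F`. -/
noncomputable def exBerge {α : Type*} (r n : ℕ) (F : SimpleGraph α) : ℕ :=
  sSup {m | ∃ H : Finset (Finset (Fin n)),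
    (∀ e ∈ H, e.card = r) ∧ ¬ IsBergeCopy F H ∧ H.card = m}

/-- The path with `ℓ` edges, on `ℓ+1` vertices. -/
def pathG (ℓ : ℕ) : SimpleGraph (Fin (ℓ + 1)) :=
  SimpleGraph.fromRel (fun x y => (x : ℕ) + 1 = (y : ℕ))

/-- `c` vertex-disjoint stars, each with `ℓ` edges (centers are the vertices `(i, 0)`). -/
def starsG (c ℓ : ℕ) : SimpleGraph (Fin c × Fin (ℓ + 1)) :=
  SimpleGraph.fromRel (fun x y => x.1 = y.1 ∧ x.2 = 0)

/-- A matching with `t` edges. -/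
def matchingG (t : ℕ) : SimpleGraph (Fin t × Fin 2) :=
  SimpleGraph.fromRel (fun x y => x.1 = y.1)

/-- Vertex-disjoint union of `k` paths, the `i`-th having `ℓ i` edges. -/
def pathsG (k : ℕ) (ℓ : Fin k → ℕ) : SimpleGraph (Σ i : Fin k, Fin (ℓ i + 1)) :=
  SimpleGraph.fromRel (fun x y => x.1 = y.1 ∧ (x.2 : ℕ) + 1 = (y.2 : ℕ))

/-- A hypergraph is connected if every two vertices are joined by a walk of hyperedges
(equivalently, lie on a common Berge path). -/
def HyperConnected {V : Type*} (H : Finset (Finset V)) : Prop :=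
  ∀ u v : V, Relation.ReflTransGen (fun a b => ∃ e ∈ H, a ∈ e ∧ b ∈ e) u v

/-- The connected Turán number `ex^con_r(n, Berge-F)`. -/
noncomputable def exConBerge {α : Type*} (r n : ℕ) (F : SimpleGraph α) : ℕ :=
  sSup {m | ∃ H : Finset (Finset (Fin n)),
    (∀ e ∈ H, e.card = r) ∧ HyperConnected H ∧ ¬ IsBergeCopy F H ∧ H.card = m}

/-!
An `F`-free hypergraph is `(F ∪ M_{k-1})`-free, and `⌊n/r⌋` pairwise disjoint hyperedges form an
`F`-free hypergraph because `F` has a vertex of degree two; hence `ex_r(n, Berge-F) ≥ n/r`.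
Conversely, let `H` be `(F ∪ M_{k-1})`-free with more than a constant number of hyperedges, and
suppose it contains a Berge copy of `F` on the vertex set `T`. The traces `e \ T` of the hyperedges
not used by the copy have between `k` and `r` points, and there are still many of them, as each
trace comes from at most `2^|T|` hyperedges. By the Erdős–Rado sunflower lemma, `k - 1` of these
traces form a sunflower. Picking two points in each of its members, all distinct (possible since
each member has at least `k` points and the petals are disjoint), gives a Berge copy of `M_{k-1}`
avoiding the copy of `F`, a contradiction. So for `n/r` beyond that constant, every
`(F ∪ M_{k-1})`-free hypergraph has at most `ex_r(n, Berge-F)` hyperedges.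
-/

open Function SimpleGraph

section BergeEmbedding

variable {α β V : Type*}

structure IsBergeEmbedding (F : SimpleGraph α) (H : Finset (Finset V)) (f : α → V)
    (φ : Sym2 α → Finset V) : Prop where
  injective : Injective f
  injOn : Set.InjOn φ F.edgeSet
  mem : ∀ e ∈ F.edgeSet, φ e ∈ H
  subset : ∀ e ∈ F.edgeSet, ∀ x ∈ e, f x ∈ φ e

theorem isBergeCopy_iff {F : SimpleGraph α} {H : Finset (Finset V)} :
    IsBergeCopy F H ↔ ∃ f φ, IsBergeEmbedding F H f φ :=
  ⟨fun ⟨f, φ, hf, hφ, h⟩ => ⟨f, φ, hf, hφ, fun e he => (h e he).1, fun e he => (h e he).2⟩,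
    fun ⟨f, φ, h⟩ => ⟨f, φ, h.injective, h.injOn, fun e he => ⟨h.mem e he, h.subset e he⟩⟩⟩

namespace IsBergeEmbedding

variable {F : SimpleGraph α} {H : Finset (Finset V)} {f : α → V} {φ : Sym2 α → Finset V}

theorem isBergeCopy (h : IsBergeEmbedding F H f φ) : IsBergeCopy F H :=
  isBergeCopy_iff.2 ⟨f, φ, h⟩

theorem mono {H' : Finset (Finset V)} (h : IsBergeEmbedding F H f φ) (hH : H ⊆ H') :
    IsBergeEmbedding F H' f φ :=
  ⟨h.injective, h.injOn, fun e he => hH (h.mem e he), h.subset⟩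

theorem comp_copy {A : SimpleGraph β} (h : IsBergeEmbedding F H f φ) (c : Copy A F) :
    IsBergeEmbedding A H (f ∘ c) (φ ∘ Sym2.map c) where
  injective := h.injective.comp c.injective
  injOn _ he₁ _ he₂ heq := Sym2.map.injective c.injective <|
    h.injOn (c.toHom.map_mem_edgeSet he₁) (c.toHom.map_mem_edgeSet he₂) heq
  mem _ he := h.mem _ (c.toHom.map_mem_edgeSet he)
  subset _ he x hx := h.subset _ (c.toHom.map_mem_edgeSet he) _ (Sym2.mem_map.2 ⟨x, hx, rfl⟩)

end IsBergeEmbedding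

theorem IsBergeCopy.of_isContained {A : SimpleGraph α} {B : SimpleGraph β}
    {H : Finset (Finset V)} (hAB : A ⊑ B) (hB : IsBergeCopy B H) : IsBergeCopy A H := by
  obtain ⟨c⟩ := hAB
  obtain ⟨f, φ, h⟩ := isBergeCopy_iff.1 hB
  exact (h.comp_copy c).isBergeCopy

def sumEdgeMap (φ : Sym2 α → Finset V) (ψ : Sym2 β → Finset V) : Sym2 (α ⊕ β) → Finset V :=
  Sym2.lift ⟨fun
    | .inl a, .inl b => φ s(a, b)
    | .inr a, .inr b => ψ s(a, b)
    | _, _ => ∅, by rintro (a | a) (b | b) <;> simp [Sym2.eq_swap]⟩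

@[simp]
theorem sumEdgeMap_map_inl (φ : Sym2 α → Finset V) (ψ : Sym2 β → Finset V) (e : Sym2 α) :
    sumEdgeMap φ ψ (e.map Sum.inl) = φ e := by
  induction e; rfl

@[simp]
theorem sumEdgeMap_map_inr (φ : Sym2 α → Finset V) (ψ : Sym2 β → Finset V) (e : Sym2 β) :
    sumEdgeMap φ ψ (e.map Sum.inr) = ψ e := by
  induction e; rfl

theorem SimpleGraph.edgeSet_sum (F : SimpleGraph α) (M : SimpleGraph β) :
    (F ⊕g M).edgeSet = Sym2.map Sum.inl '' F.edgeSet ∪ Sym2.map Sum.inr '' M.edgeSet := by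
  refine Set.Subset.antisymm ?_ ?_
  · intro e he
    induction e with
    | _ x y =>
      rcases x with a | a <;> rcases y with b | b
      · exact Or.inl ⟨s(a, b), he, rfl⟩
      · simp at he
      · simp at he
      · exact Or.inr ⟨s(a, b), he, rfl⟩
  · rintro _ (⟨e, he, rfl⟩ | ⟨e, he, rfl⟩)
    · exact (Embedding.sumInl (H := M)).toHom.map_mem_edgeSet he
    · exact (Embedding.sumInr (G := F)).toHom.map_mem_edgeSet he

theorem IsBergeEmbedding.sum {F : SimpleGraph α} {M : SimpleGraph β} {H : Finset (Finset V)}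
    {f : α → V} {φ : Sym2 α → Finset V} {g : β → V} {ψ : Sym2 β → Finset V}
    (hF : IsBergeEmbedding F H f φ) (hM : IsBergeEmbedding M H g ψ)
    (hfg : ∀ a b, f a ≠ g b) (hφψ : ∀ e ∈ F.edgeSet, ∀ e' ∈ M.edgeSet, φ e ≠ ψ e') :
    IsBergeEmbedding (F ⊕g M) H (Sum.elim f g) (sumEdgeMap φ ψ) where
  injective := hF.injective.sumElim hM.injective hfg
  injOn := by
    simp only [SimpleGraph.edgeSet_sum, Set.InjOn, Set.mem_union, Set.mem_image]
    rintro _ (⟨e₁, he₁, rfl⟩ | ⟨e₁, he₁, rfl⟩) _ (⟨e₂, he₂, rfl⟩ | ⟨e₂, he₂, rfl⟩) heq <;>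
      simp only [sumEdgeMap_map_inl, sumEdgeMap_map_inr] at heq
    · rw [hF.injOn he₁ he₂ heq]
    · exact absurd heq (hφψ e₁ he₁ e₂ he₂)
    · exact absurd heq.symm (hφψ e₂ he₂ e₁ he₁)
    · rw [hM.injOn he₁ he₂ heq]
  mem := by
    simp only [SimpleGraph.edgeSet_sum, Set.mem_union, Set.mem_image]
    rintro _ (⟨e, he, rfl⟩ | ⟨e, he, rfl⟩)
    · simpa using hF.mem e he
    · simpa using hM.mem e he
  subset := by
    simp only [SimpleGraph.edgeSet_sum, Set.mem_union, Set.mem_image]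
    rintro _ (⟨e, he, rfl⟩ | ⟨e, he, rfl⟩) _ hy <;>
      obtain ⟨x, hx, rfl⟩ := Sym2.mem_map.1 hy
    · simpa using hF.subset e he x hx
    · simpa using hM.subset e he x hx

theorem not_isBergeCopy_of_pairwiseDisjoint {F : SimpleGraph α} {H : Finset (Finset V)}
    (hH : (H : Set (Finset V)).PairwiseDisjoint id)
    (hF : ∃ v a b, a ≠ b ∧ F.Adj v a ∧ F.Adj v b) : ¬ IsBergeCopy F H := by
  intro hcopy
  obtain ⟨f, φ, h⟩ := isBergeCopy_iff.1 hcopy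
  obtain ⟨v, a, b, hab, hva, hvb⟩ := hF
  have hne : φ s(v, a) ≠ φ s(v, b) := fun heq => hab <| by
    simpa [hva.ne.symm] using h.injOn hva hvb heq
  exact not_disjoint_iff.2 ⟨f v, h.subset _ hva v (Sym2.mem_mk_left v a),
    h.subset _ hvb v (Sym2.mem_mk_left v b)⟩ (hH (h.mem _ hva) (h.mem _ hvb) hne)

theorem exists_pairwiseDisjoint_card_eq [DecidableEq V] {r : ℕ} (hr : 0 < r) :
    ∀ (m : ℕ) (U : Finset V), m * r ≤ U.card → ∃ H : Finset (Finset V), H.card = m ∧ (∀ e ∈ H, e.card = r ∧ e ⊆ U) ∧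
      (H : Set (Finset V)).PairwiseDisjoint id
  | 0, _, _ => ⟨∅, by simp⟩
  | m + 1, U, hU => by
    obtain ⟨A, hAU, hA⟩ := exists_subset_card_eq (s := U) (n := r) (by nlinarith)
    obtain ⟨H, hH, hHU, hHd⟩ := exists_pairwiseDisjoint_card_eq hr m (U \ A) (by
      rw [card_sdiff_of_subset hAU, hA]
      rw [Nat.succ_mul] at hU
      omega)
    have hAH : ∀ e ∈ H, Disjoint A e := fun e he =>
      disjoint_of_subset_right (hHU e he).2 disjoint_sdiff
    have hAH' : A ∉ H := fun h => by
      rw [disjoint_self.1 (hAH A h), bot_eq_empty, card_empty] at hA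
      omega
    refine ⟨insert A H, by rw [card_insert_of_notMem hAH', hH], ?_, ?_⟩
    · simp only [mem_insert, forall_eq_or_imp]
      exact ⟨⟨hA, hAU⟩, fun e he => ⟨(hHU e he).1, (hHU e he).2.trans sdiff_subset⟩⟩
    · rw [coe_insert]
      exact hHd.insert fun e he _ => hAH e he

end BergeEmbedding

section MatchingG

variable {V : Type*} {t : ℕ}

theorem matchingG_adj {p p' : Fin t × Fin 2} : (matchingG t).Adj p p' ↔ p ≠ p' ∧ p.1 = p'.1 := by
  simp [matchingG, eq_comm]

theorem eq_mk_of_mem_edgeSet_matchingG {e : Sym2 (Fin t × Fin 2)}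
    (he : e ∈ (matchingG t).edgeSet) :
    e = s(((e.map Prod.fst).sup, 0), ((e.map Prod.fst).sup, 1)) := by
  induction e with
  | _ p p' =>
    obtain ⟨i, u⟩ := p
    obtain ⟨j, v⟩ := p'
    obtain ⟨hne, rfl : i = j⟩ := matchingG_adj.1 he
    fin_cases u <;> fin_cases v <;> simp_all [Sym2.eq_swap]

theorem isBergeEmbedding_matchingG {H : Finset (Finset V)} {E : Fin t → Finset V}
    {q : Fin t × Fin 2 → V} (hE : Injective E) (hEH : ∀ i, E i ∈ H) (hq : Injective q)
    (hqE : ∀ p, q p ∈ E p.1) :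
    IsBergeEmbedding (matchingG t) H q (fun e => E (e.map Prod.fst).sup) where
  injective := hq
  injOn e₁ he₁ e₂ he₂ heq := by
    rw [eq_mk_of_mem_edgeSet_matchingG he₁, eq_mk_of_mem_edgeSet_matchingG he₂, hE heq]
  mem _ _ := hEH _
  subset e he := by
    induction e with
    | _ p p' =>
      obtain ⟨-, hpp' : p.1 = p'.1⟩ := matchingG_adj.1 he
      simpa [← hpp'] using ⟨hqE p, hpp' ▸ hqE p'⟩

end MatchingG

section Sunflower

variable {ι V : Type*} [DecidableEq V]

structure IsSunflower (K : Finset V) (P : ι → Finset V) : Prop where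
  core_subset : ∀ i, K ⊆ P i
  petal_nonempty : ∀ i, (P i \ K).Nonempty
  inter_subset : Pairwise fun i j => P i ∩ P j ⊆ K

namespace IsSunflower

variable {K : Finset V} {P : ι → Finset V}

theorem eq_of_mem_petal (h : IsSunflower K P) {x : V} {i j : ι} (hi : x ∈ P i \ K)
    (hj : x ∈ P j) : i = j := by
  by_contra hij
  exact (mem_sdiff.1 hi).2 (h.inter_subset hij (mem_inter.2 ⟨(mem_sdiff.1 hi).1, hj⟩))

theorem injective (h : IsSunflower K P) : Injective P := fun i _ hij =>
  have ⟨_, hx⟩ := h.petal_nonempty i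
  h.eq_of_mem_petal hx (hij ▸ (mem_sdiff.1 hx).1)

theorem injective_pair (h : IsSunflower K P) {a b : ι → V} (ha : Injective a)
    (haP : ∀ i, a i ∈ P i) (hbP : ∀ i, b i ∈ P i \ K) (hab : ∀ i, a i ≠ b i) :
    Injective fun p : ι × Fin 2 => ![a p.1, b p.1] p.2 := by
  have hb : Injective b := fun i _ hij =>
    h.eq_of_mem_petal (hbP i) (hij ▸ (mem_sdiff.1 (hbP _)).1)
  have hab' : ∀ i j, a i ≠ b j := fun i j hij =>
    hab i (by rwa [h.eq_of_mem_petal (hbP j) (hij ▸ haP i)] at hij)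
  rintro ⟨i, u⟩ ⟨j, v⟩ huv
  fin_cases u <;> fin_cases v <;> simp_all [ha.eq_iff, hb.eq_iff, hab' _ _ |>.symm]

theorem insert (h : IsSunflower K P) {x : V} (hx : ∀ i, x ∉ P i) :
    IsSunflower (insert x K) fun i => insert x (P i) where
  core_subset i := insert_subset_insert x (h.core_subset i)
  petal_nonempty i := (h.petal_nonempty i).mono fun y hy => by
    have hyx : y ≠ x := fun hyx => hx i (hyx ▸ (mem_sdiff.1 hy).1)
    simp_all
  inter_subset _ _ hij := by
    simpa only [← insert_inter_distrib] using insert_subset_insert x (h.inter_subset hij)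

end IsSunflower

theorem isSunflower_empty_of_pairwise_disjoint {P : ι → Finset V}
    (hP : Pairwise (Disjoint on P)) (hne : ∀ i, (P i).Nonempty) : IsSunflower ∅ P where
  core_subset _ := empty_subset _
  petal_nonempty i := by simpa using hne i
  inter_subset _ _ hij := (disjoint_iff_inter_eq_empty.1 (hP hij)).le

/-- If the core has `t` points, pair each of them with a petal point; otherwise every petal has
at least two points. -/
theorem IsSunflower.exists_injective_pair_mem {t : ℕ} {K : Finset V} {P : Fin t → Finset V}
    (h : IsSunflower K P) (hP : ∀ i, t + 1 ≤ (P i).card) :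
    ∃ q : Fin t × Fin 2 → V, Injective q ∧ ∀ p, q p ∈ P p.1 := by
  suffices ∃ a b : Fin t → V, Injective a ∧ (∀ i, a i ∈ P i) ∧ (∀ i, b i ∈ P i \ K) ∧
      ∀ i, a i ≠ b i by
    obtain ⟨a, b, ha, haP, hbP, hab⟩ := this
    refine ⟨_, h.injective_pair ha haP hbP hab, fun ⟨i, u⟩ => ?_⟩
    fin_cases u
    exacts [haP i, (mem_sdiff.1 (hbP i)).1]
  by_cases hK : t ≤ K.card
  · obtain ⟨c⟩ := Function.Embedding.nonempty_of_card_le (α := Fin t) (β := K) (by simpa)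
    choose b hb using h.petal_nonempty
    exact ⟨fun i => c i, b, Subtype.val_injective.comp c.injective,
      fun i => h.core_subset i (c i).2, hb, fun i hi => (mem_sdiff.1 (hb i)).2 (hi ▸ (c i).2)⟩
  · have hpetal : ∀ i, 1 < (P i \ K).card := fun i => by
      have := le_card_sdiff K (P i)
      have := hP i
      omega
    choose a ha b hb hab using fun i => one_lt_card.1 (hpetal i)
    exact ⟨a, b, fun i j hij => h.eq_of_mem_petal (ha i) (hij ▸ (mem_sdiff.1 (ha j)).1),
      fun i => (mem_sdiff.1 (ha i)).1, hb, hab⟩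

theorem exists_pairwise_disjoint_or_transversal (S : Finset (Finset V)) {b : ℕ}
    (hS : ∀ s ∈ S, s.card ≤ b) : ∀ t : ℕ,
    (∃ P : Fin t → Finset V, (∀ i, P i ∈ S) ∧ Pairwise (Disjoint on P)) ∨
      ∃ W : Finset V, W.card ≤ t * b ∧ ∀ s ∈ S, ¬ Disjoint s W
  | 0 => Or.inl ⟨Fin.elim0, Fin.rec0, fun i => i.elim0⟩
  | t + 1 => by
    obtain ⟨P, hPS, hP⟩ | ⟨W, hW, hWS⟩ := exists_pairwise_disjoint_or_transversal S hS t
    · by_cases hW : ∃ s ∈ S, Disjoint s (univ.biUnion P)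
      · obtain ⟨s, hs, hsW⟩ := hW
        have hsP : ∀ j, Disjoint s (P j) := fun j =>
          hsW.mono_right (subset_biUnion_of_mem P (mem_univ j))
        refine Or.inl ⟨Fin.cons s P, Fin.cases hs hPS, ?_⟩
        intro i j hij
        induction i using Fin.cases <;> induction j using Fin.cases
        · exact absurd rfl hij
        · simpa [onFun] using hsP _
        · simpa [onFun] using (hsP _).symm
        · simpa [onFun] using hP fun h => hij (congrArg _ h)
      · push Not at hW
        refine Or.inr ⟨univ.biUnion P, ?_, hW⟩
        calc (univ.biUnion P).card ≤ univ.card * b :=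
              card_biUnion_le_card_mul _ _ _ fun i _ => hS _ (hPS i)
          _ ≤ (t + 1) * b := by simp [Nat.mul_le_mul_right]
    · exact Or.inr ⟨W, hW.trans (Nat.mul_le_mul_right b t.le_succ), hWS⟩

theorem exists_lt_card_filter_mem_of_transversal {S : Finset (Finset V)} {W : Finset V} {m : ℕ}
    (hW : ∀ s ∈ S, ¬ Disjoint s W) (hS : W.card * m < S.card) :
    ∃ x ∈ W, m < {s ∈ S | x ∈ s}.card := by
  by_contra! h
  have hcover : S ⊆ W.biUnion fun x => {s ∈ S | x ∈ s} := fun s hs => by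
    obtain ⟨x, hxs, hxW⟩ := not_disjoint_iff.1 (hW s hs)
    exact mem_biUnion.2 ⟨x, hxW, mem_filter.2 ⟨hs, hxs⟩⟩
  exact hS.not_ge ((card_le_card hcover).trans (card_biUnion_le_card_mul _ _ _ h))

def link (S : Finset (Finset V)) (x : V) : Finset (Finset V) :=
  {s ∈ S | x ∈ s}.image (·.erase x)

theorem mem_link {S : Finset (Finset V)} {x : V} {s : Finset V} :
    s ∈ link S x ↔ x ∉ s ∧ insert x s ∈ S := by
  simp only [link, mem_image, mem_filter]
  constructor
  · rintro ⟨e, ⟨he, hxe⟩, rfl⟩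
    exact ⟨notMem_erase x e, by rwa [insert_erase hxe]⟩
  · rintro ⟨hxs, hs⟩
    exact ⟨insert x s, ⟨hs, mem_insert_self x s⟩, erase_insert hxs⟩

theorem card_link (S : Finset (Finset V)) (x : V) : (link S x).card = {s ∈ S | x ∈ s}.card :=
  card_image_of_injOn fun _ hs _ hs' => erase_injOn' x (mem_filter.1 hs).2 (mem_filter.1 hs').2

/-- The bound of the Erdős–Rado argument: a transversal of at most `t (b + 1)` points, one of which
lies in more than `sunflowerBound t b + 1` members. -/
def sunflowerBound (t : ℕ) : ℕ → ℕ
  | 0 => 0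
  | b + 1 => t * (b + 1) * (sunflowerBound t b + 1)

/-- The Erdős–Rado sunflower lemma. Either `t` members are pairwise disjoint, or a small
transversal has a point lying in many members, and their link (minus `∅`) has smaller members. -/
theorem exists_isSunflower (t : ℕ) : ∀ {b : ℕ} {S : Finset (Finset V)}, ∅ ∉ S →
    (∀ s ∈ S, s.card ≤ b) → sunflowerBound t b < S.card →
    ∃ (K : Finset V) (P : Fin t → Finset V), (∀ i, P i ∈ S) ∧ IsSunflower K P
  | 0, S, hS₀, hb, hS => by
    obtain ⟨s, hs⟩ := card_pos.1 hS
    exact absurd (card_eq_zero.1 (Nat.le_zero.1 (hb s hs)) ▸ hs) hS₀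
  | b + 1, S, hS₀, hb, hS => by
    obtain ⟨P, hPS, hP⟩ | ⟨W, hW, hWS⟩ := exists_pairwise_disjoint_or_transversal S hb t
    · refine ⟨∅, P, hPS, isSunflower_empty_of_pairwise_disjoint hP fun i => ?_⟩
      exact nonempty_iff_ne_empty.2 fun h => hS₀ (h ▸ hPS i)
    obtain ⟨x, -, hx⟩ := exists_lt_card_filter_mem_of_transversal hWS
      (m := sunflowerBound t b + 1) (lt_of_le_of_lt (Nat.mul_le_mul_right _ hW) hS)
    have hL : sunflowerBound t b < ((link S x).erase ∅).card := by
      have := pred_card_le_card_erase (s := link S x) (a := ∅)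
      rw [card_link] at this
      omega
    have hLb : ∀ s ∈ (link S x).erase ∅, s.card ≤ b := fun s hs => by
      obtain ⟨hxs, hs⟩ := mem_link.1 (mem_of_mem_erase hs)
      simpa [card_insert_of_notMem hxs] using hb _ hs
    obtain ⟨K, P, hPL, hP⟩ := exists_isSunflower t (notMem_erase _ _) hLb hL
    have hPL' := fun i => mem_link.1 (mem_of_mem_erase (hPL i))
    exact ⟨insert x K, fun i => insert x (P i), fun i => (hPL' i).2,
      hP.insert fun i => (hPL' i).1⟩

end Sunflower

section BergeMatching

variable {V : Type*} [DecidableEq V]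

theorem card_le_card_image_sdiff_mul_two_pow (G : Finset (Finset V)) (T : Finset V) :
    G.card ≤ (G.image (· \ T)).card * 2 ^ T.card := by
  have hinj : Set.InjOn (fun e => (e \ T, e ∩ T)) G := fun e₁ _ e₂ _ h => by
    rw [← sdiff_union_inter e₁ T, ← sdiff_union_inter e₂ T]
    simp_all
  calc G.card ≤ (G.image (· \ T) ×ˢ T.powerset).card :=
        card_le_card_of_injOn _ (fun e he => mem_product.2
          ⟨mem_image_of_mem _ he, mem_powerset.2 inter_subset_right⟩) hinj
    _ = _ := by rw [card_product, card_powerset]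

theorem exists_isBergeEmbedding_matchingG_of_card_lt {t r : ℕ} {T : Finset V}
    {G : Finset (Finset V)} (hG : ∀ e ∈ G, e.card = r) (hr : T.card + t + 1 ≤ r)
    (hbig : sunflowerBound t r * 2 ^ T.card < G.card) :
    ∃ q ψ, IsBergeEmbedding (matchingG t) G q ψ ∧ ∀ p, q p ∉ T := by
  set S := G.image (· \ T)
  have hS : ∀ s ∈ S, t + 1 ≤ s.card ∧ s.card ≤ r := by
    simp only [S, mem_image]
    rintro _ ⟨e, he, rfl⟩
    have := le_card_sdiff T e
    have := card_le_card (sdiff_subset (s := e) (t := T))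
    have := hG e he
    omega
  have hS₀ : ∅ ∉ S := fun h => by simpa using (hS ∅ h).1
  have hScard : sunflowerBound t r < S.card := lt_of_mul_lt_mul_right
    (hbig.trans_le (card_le_card_image_sdiff_mul_two_pow G T)) (Nat.zero_le _)
  obtain ⟨K, P, hPS, hP⟩ := exists_isSunflower t hS₀ (fun s hs => (hS s hs).2) hScard
  obtain ⟨q, hq, hqP⟩ := hP.exists_injective_pair_mem fun i => (hS _ (hPS i)).1
  choose E hEG hET using fun i => mem_image.1 (hPS i)
  have hE : Injective E := fun i j h => hP.injective (by rw [← hET, h, hET])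
  have hqE : ∀ p, q p ∈ E p.1 \ T := fun p => (hET p.1).symm ▸ hqP p
  exact ⟨q, _, isBergeEmbedding_matchingG hE hEG hq fun p => (mem_sdiff.1 (hqE p)).1,
    fun p => (mem_sdiff.1 (hqE p)).2⟩

theorem IsBergeCopy.sum_matchingG {α : Type*} [Fintype α] {F : SimpleGraph α}
    {H : Finset (Finset V)} {t r : ℕ} (hF : IsBergeCopy F H) (hH : ∀ e ∈ H, e.card = r)
    (hr : Fintype.card α + t + 1 ≤ r)
    (hbig : sunflowerBound t r * 2 ^ Fintype.card α + Fintype.card (Sym2 α) < H.card) :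
    IsBergeCopy (F ⊕g matchingG t) H := by
  obtain ⟨f, φ, hfφ⟩ := isBergeCopy_iff.1 hF
  set T := univ.image f
  set Φ := univ.image φ
  have hT : T.card ≤ Fintype.card α := card_image_le.trans_eq card_univ
  have hΦ : Φ.card ≤ Fintype.card (Sym2 α) := card_image_le.trans_eq card_univ
  have hG : sunflowerBound t r * 2 ^ T.card < (H \ Φ).card := by
    have := le_card_sdiff Φ H
    have := Nat.mul_le_mul_left (sunflowerBound t r) (Nat.pow_le_pow_right two_pos hT)
    omega
  obtain ⟨q, ψ, hqψ, hqT⟩ := exists_isBergeEmbedding_matchingG_of_card_lt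
    (fun e he => hH e (mem_sdiff.1 he).1) (by omega) hG
  refine (hfφ.sum (hqψ.mono sdiff_subset) (fun a p h => hqT p ?_)
    fun e _ e' he' h => ?_).isBergeCopy
  · exact h ▸ mem_image_of_mem f (mem_univ a)
  · exact (mem_sdiff.1 (hqψ.mem e' he')).2 (h ▸ mem_image_of_mem φ (mem_univ e))

end BergeMatching

section ExBerge

variable {α : Type*} {r n : ℕ}

theorem le_exBerge {F : SimpleGraph α} {H : Finset (Finset (Fin n))} (hH : ∀ e ∈ H, e.card = r)
    (hF : ¬ IsBergeCopy F H) : H.card ≤ exBerge r n F := by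
  refine le_csSup ⟨2 ^ n, ?_⟩ ⟨H, hH, hF, rfl⟩
  rintro _ ⟨H', -, -, rfl⟩
  simpa using card_le_univ H'

theorem exBerge_le {F : SimpleGraph α} {m : ℕ}
    (h : ∀ H : Finset (Finset (Fin n)), (∀ e ∈ H, e.card = r) → ¬ IsBergeCopy F H → H.card ≤ m) :
    exBerge r n F ≤ m :=
  csSup_le' fun _ ⟨H, hH, hF, hm⟩ => hm ▸ h H hH hF

theorem exBerge_mono {β : Type*} {A : SimpleGraph α} {B : SimpleGraph β} (hAB : A ⊑ B) :
    exBerge r n A ≤ exBerge r n B :=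
  exBerge_le fun _ hH hA => le_exBerge hH fun hB => hA (hB.of_isContained hAB)

theorem div_le_exBerge {F : SimpleGraph α} (hF : ∃ v a b, a ≠ b ∧ F.Adj v a ∧ F.Adj v b)
    (hr : 0 < r) : n / r ≤ exBerge r n F := by
  obtain ⟨H, hHn, hHr, hHd⟩ := exists_pairwiseDisjoint_card_eq hr (n / r) (univ : Finset (Fin n))
    (by simpa using Nat.div_mul_le_self n r)
  exact hHn ▸ le_exBerge (fun e he => (hHr e he).1) (not_isBergeCopy_of_pairwiseDisjoint hHd hF)

end ExBerge

theorem ex_berge_union_matching_eq_of_not_matching_general {α : Type*} [Fintype α]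
    (F : SimpleGraph α) (k r : ℕ) (hk : 2 ≤ k) (hr : k + Fintype.card α ≤ r)
    (hnotmatching : ∃ v a b, a ≠ b ∧ F.Adj v a ∧ F.Adj v b) :
    ∃ N, ∀ n ≥ N,
      exBerge r n (F.sum (matchingG (k - 1))) = exBerge r n F := by
  set B := sunflowerBound (k - 1) r * 2 ^ Fintype.card α + Fintype.card (Sym2 α)
  refine ⟨r * (B + 1), fun n hn => le_antisymm ?_ (exBerge_mono ⟨Embedding.sumInl.toCopy⟩)⟩
  have hB : B < n / r := (Nat.le_div_iff_mul_le (by omega)).2 (by rw [mul_comm]; exact hn)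
  refine exBerge_le fun H hH hfree => ?_
  by_cases hF : IsBergeCopy F H
  · have hsmall : H.card ≤ B := by
      by_contra! hbig
      exact hfree (hF.sum_matchingG hH (by omega) hbig)
    exact hsmall.trans (hB.le.trans (div_le_exBerge hnotmatching (by omega)))
  · exact le_exBerge hH hF

theorem ex_berge_union_matching_eq_of_not_matching {α : Type*} [Fintype α]
    (F : SimpleGraph α) (k r : ℕ) (hk : 2 ≤ k) (hr : k + Fintype.card α ≤ r)
    (hedge : F.edgeSet.Nonempty)
    (hnotmatching : ∃ v a b, a ≠ b ∧ F.Adj v a ∧ F.Adj v b) :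
    ∃ N, ∀ n ≥ N,
      exBerge r n (F.sum (matchingG (k - 1))) = exBerge r n F :=
  ex_berge_union_matching_eq_of_not_matching_general F k r hk hr hnotmatching
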